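/- Let γ > 1 and ε > 0 satisfy (γ-1)ε²e/(8γπ²) < 1, set c = ε/(2π), and let ρ_s, u_s, v_s, p_s: ℝ² → ℝ denote the stationary isentropic vortex fields: r² = (x-5)² + (y-5)², δT = -((γ-1)ε²/(8γπ²)) e^{1-r²}, ρ_s = (1+δT)^{1/(γ-1)}, p_s = (1+δT)^{γ/(γ-1)}, u_s = -c e^{(1-r²)/2}(y-5), v_s = c e^{(1-r²)/2}(x-5). Then the fields ρ(x,y,t) = ρ_s(x-t, y-t), u(x,y,t) = 1 + u_s(x-t, y-t), v(x,y,t) = 1 + v_s(x-t, y-t), p(x,y,t) = p_s(x-t, y-t) form an exact solution of the time-dependent two-dimensional compressible Euler equations: ∂_t ρ + ∂_x(ρu) + ∂_y(ρv) = 0, ∂_t(ρu) + ∂_x(ρu²+p) + ∂_y(ρuv) = 0, ∂_t(ρv) + ∂_x(ρuv) + ∂_y(ρv²+p) = 0, and ∂_t(ρE) + ∂_x(u(ρE+p)) + ∂_y(v(ρE+p)) = 0, where ρE = p/(γ-1) + ρ(u²+v²)/2. -/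

import Mathlib

/-!
The stationary vortex is a radially symmetric swirl: density `R(r²)`, pressure `P(r²)` and
velocity `W(r²) · (-(y - 5), x - 5)`. Such a flow is divergence free and transports every radial
quantity, so the stationary Euler equations reduce to the cyclostrophic balance `dP/ds = R W² / 2`
in `s = r²`. With `T = 1 - δ e^{1-s}`, `R = T^{1/(γ-1)}` and `P = T^{γ/(γ-1)}` this is exactly the
relation `2γδ = (γ - 1) c²` between the amplitudes. Moving a stationary solution with the uniform
velocity `(1, 1)` gives a time-dependent one: on fields `f (x - t) (y - t)` the time derivative is
`-(∂ₓ + ∂_y)`, and each conservation law becomes a linear combination of the stationary equations.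
-/

open Real Function

/-- The stationary Euler equations in primitive variables, the energy equation written for the
pressure. -/
structure IsStationaryEulerAt (γ : ℝ) (ρ u v p : ℝ × ℝ → ℝ) (z : ℝ × ℝ) : Prop where
  differentiableAt_density : DifferentiableAt ℝ ρ z
  differentiableAt_velocity_fst : DifferentiableAt ℝ u z
  differentiableAt_velocity_snd : DifferentiableAt ℝ v z
  differentiableAt_pressure : DifferentiableAt ℝ p z
  mass : u z * fderiv ℝ ρ z (1, 0) + v z * fderiv ℝ ρ z (0, 1)
    + ρ z * (fderiv ℝ u z (1, 0) + fderiv ℝ v z (0, 1)) = 0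
  momentum_fst : ρ z * (u z * fderiv ℝ u z (1, 0) + v z * fderiv ℝ u z (0, 1))
    + fderiv ℝ p z (1, 0) = 0
  momentum_snd : ρ z * (u z * fderiv ℝ v z (1, 0) + v z * fderiv ℝ v z (0, 1))
    + fderiv ℝ p z (0, 1) = 0
  pressure : u z * fderiv ℝ p z (1, 0) + v z * fderiv ℝ p z (0, 1)
    + γ * p z * (fderiv ℝ u z (1, 0) + fderiv ℝ v z (0, 1)) = 0

theorem hasFDerivAt_sub_sq_add_sub_sq (x₀ y₀ : ℝ) (z : ℝ × ℝ) :
    HasFDerivAt (fun z : ℝ × ℝ => (z.1 - x₀) ^ 2 + (z.2 - y₀) ^ 2)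
      ((2 * (z.1 - x₀)) • ContinuousLinearMap.fst ℝ ℝ ℝ
        + (2 * (z.2 - y₀)) • ContinuousLinearMap.snd ℝ ℝ ℝ) z := by
  refine ((((hasFDerivAt_fst (p := z)).sub_const x₀).pow 2).add
    (((hasFDerivAt_snd (p := z)).sub_const y₀).pow 2)).congr_fderiv ?_
  ext <;> simp [mul_comm]

/-- `hP` is the cyclostrophic balance `∂ᵣp = ρ u_θ² / r`, in the variable `s = r²` and with
`u_θ = r W`. -/
theorem isStationaryEulerAt_swirl (γ : ℝ) {R W P : ℝ → ℝ} {x₀ y₀ : ℝ} {z : ℝ × ℝ}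
    (hR : DifferentiableAt ℝ R ((z.1 - x₀) ^ 2 + (z.2 - y₀) ^ 2))
    (hW : DifferentiableAt ℝ W ((z.1 - x₀) ^ 2 + (z.2 - y₀) ^ 2))
    (hP : HasDerivAt P (R ((z.1 - x₀) ^ 2 + (z.2 - y₀) ^ 2)
      * W ((z.1 - x₀) ^ 2 + (z.2 - y₀) ^ 2) ^ 2 / 2) ((z.1 - x₀) ^ 2 + (z.2 - y₀) ^ 2)) :
    IsStationaryEulerAt γ (fun z => R ((z.1 - x₀) ^ 2 + (z.2 - y₀) ^ 2))
      (fun z => -(W ((z.1 - x₀) ^ 2 + (z.2 - y₀) ^ 2) * (z.2 - y₀)))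
      (fun z => W ((z.1 - x₀) ^ 2 + (z.2 - y₀) ^ 2) * (z.1 - x₀))
      (fun z => P ((z.1 - x₀) ^ 2 + (z.2 - y₀) ^ 2)) z := by
  have hs := hasFDerivAt_sub_sq_add_sub_sq x₀ y₀ z
  have hρ : HasFDerivAt (fun z => R ((z.1 - x₀) ^ 2 + (z.2 - y₀) ^ 2)) _ z :=
    hR.hasDerivAt.comp_hasFDerivAt z hs
  have hω : HasFDerivAt (fun z => W ((z.1 - x₀) ^ 2 + (z.2 - y₀) ^ 2)) _ z :=
    hW.hasDerivAt.comp_hasFDerivAt z hs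
  have hu : HasFDerivAt (fun z => -(W ((z.1 - x₀) ^ 2 + (z.2 - y₀) ^ 2) * (z.2 - y₀))) _ z :=
    (hω.mul (hasFDerivAt_snd.sub_const y₀)).neg
  have hv : HasFDerivAt (fun z => W ((z.1 - x₀) ^ 2 + (z.2 - y₀) ^ 2) * (z.1 - x₀)) _ z :=
    hω.mul (hasFDerivAt_fst.sub_const x₀)
  have hp : HasFDerivAt (fun z => P ((z.1 - x₀) ^ 2 + (z.2 - y₀) ^ 2)) _ z :=
    hP.comp_hasFDerivAt z hs
  refine ⟨hρ.differentiableAt, hu.differentiableAt, hv.differentiableAt, hp.differentiableAt,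
    ?_, ?_, ?_, ?_⟩ <;>
  · simp only [hρ.fderiv, hu.fderiv, hv.fderiv, hp.fderiv, add_apply,
      neg_apply, smul_apply, ContinuousLinearMap.coe_fst',
      ContinuousLinearMap.coe_snd', smul_eq_mul]
    ring

theorem hasDerivAt_convected {f : ℝ → ℝ → ℝ} {x y t : ℝ}
    (hf : DifferentiableAt ℝ (uncurry f) (x - t, y - t)) :
    HasDerivAt (fun x' => f (x' - t) (y - t)) (fderiv ℝ (uncurry f) (x - t, y - t) (1, 0)) x ∧
    HasDerivAt (fun y' => f (x - t) (y' - t)) (fderiv ℝ (uncurry f) (x - t, y - t) (0, 1)) y ∧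
    HasDerivAt (fun t' => f (x - t') (y - t'))
      (-(fderiv ℝ (uncurry f) (x - t, y - t) (1, 0)
        + fderiv ℝ (uncurry f) (x - t, y - t) (0, 1))) t := by
  have hf' := hf.hasFDerivAt
  refine ⟨?_, ?_, ?_⟩
  · exact hf'.comp_hasDerivAt x
      (((hasDerivAt_id x).sub_const t).prodMk (hasDerivAt_const x (y - t)))
  · exact hf'.comp_hasDerivAt y
      ((hasDerivAt_const y (x - t)).prodMk ((hasDerivAt_id y).sub_const t))
  · refine (hf'.comp_hasDerivAt t
      (((hasDerivAt_id t).const_sub x).prodMk ((hasDerivAt_id t).const_sub y))).congr_deriv ?_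
    rw [← map_add, ← map_neg]
    norm_num

theorem IsStationaryEulerAt.conservation_laws_convected {γ : ℝ} (hγ : γ ≠ 1)
    {ρ u v p : ℝ → ℝ → ℝ} {x y t : ℝ}
    (h : IsStationaryEulerAt γ (uncurry ρ) (uncurry u) (uncurry v) (uncurry p) (x - t, y - t)) :
    (deriv (fun t' => ρ (x - t') (y - t')) t
        + deriv (fun x' => ρ (x' - t) (y - t) * (1 + u (x' - t) (y - t))) x
        + deriv (fun y' => ρ (x - t) (y' - t) * (1 + v (x - t) (y' - t))) y = 0) ∧
    (deriv (fun t' => ρ (x - t') (y - t') * (1 + u (x - t') (y - t'))) t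
        + deriv (fun x' => ρ (x' - t) (y - t) * (1 + u (x' - t) (y - t)) ^ 2 + p (x' - t) (y - t)) x
        + deriv (fun y' => ρ (x - t) (y' - t) * (1 + u (x - t) (y' - t))
          * (1 + v (x - t) (y' - t))) y = 0) ∧
    (deriv (fun t' => ρ (x - t') (y - t') * (1 + v (x - t') (y - t'))) t
        + deriv (fun x' => ρ (x' - t) (y - t) * (1 + u (x' - t) (y - t))
          * (1 + v (x' - t) (y - t))) x
        + deriv (fun y' => ρ (x - t) (y' - t) * (1 + v (x - t) (y' - t)) ^ 2 + p (x - t) (y' - t)) y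
        = 0) ∧
    (deriv (fun t' => p (x - t') (y - t') / (γ - 1)
          + ρ (x - t') (y - t') * ((1 + u (x - t') (y - t')) ^ 2
            + (1 + v (x - t') (y - t')) ^ 2) / 2) t
        + deriv (fun x' => (1 + u (x' - t) (y - t)) * (p (x' - t) (y - t) / (γ - 1)
          + ρ (x' - t) (y - t) * ((1 + u (x' - t) (y - t)) ^ 2 + (1 + v (x' - t) (y - t)) ^ 2) / 2
          + p (x' - t) (y - t))) x
        + deriv (fun y' => (1 + v (x - t) (y' - t)) * (p (x - t) (y' - t) / (γ - 1)
          + ρ (x - t) (y' - t) * ((1 + u (x - t) (y' - t)) ^ 2 + (1 + v (x - t) (y' - t)) ^ 2) / 2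
          + p (x - t) (y' - t))) y = 0) := by
  obtain ⟨hρ, hu, hv, hp, mass, mom₁, mom₂, pres⟩ := h
  simp only [uncurry_apply_pair] at mass mom₁ mom₂ pres
  obtain ⟨ρx, ρy, ρt⟩ := hasDerivAt_convected hρ
  obtain ⟨ux, uy, ut⟩ := hasDerivAt_convected hu
  obtain ⟨vx, vy, vt⟩ := hasDerivAt_convected hv
  obtain ⟨px, py, pt⟩ := hasDerivAt_convected hp
  replace ux := ux.const_add 1
  replace uy := uy.const_add 1
  replace ut := ut.const_add 1
  replace vx := vx.const_add 1
  replace vy := vy.const_add 1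
  replace vt := vt.const_add 1
  have Ex := (px.div_const (γ - 1)).fun_add
    ((ρx.fun_mul ((ux.fun_pow 2).fun_add (vx.fun_pow 2))).div_const 2)
  have Ey := (py.div_const (γ - 1)).fun_add
    ((ρy.fun_mul ((uy.fun_pow 2).fun_add (vy.fun_pow 2))).div_const 2)
  have Et := (pt.div_const (γ - 1)).fun_add
    ((ρt.fun_mul ((ut.fun_pow 2).fun_add (vt.fun_pow 2))).div_const 2)
  refine ⟨?_, ?_, ?_, ?_⟩
  · rw [ρt.deriv, (ρx.fun_mul ux).deriv, (ρy.fun_mul vy).deriv]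
    linear_combination mass
  · rw [(ρt.fun_mul ut).deriv, ((ρx.fun_mul (ux.fun_pow 2)).fun_add px).deriv,
      ((ρy.fun_mul uy).fun_mul vy).deriv]
    linear_combination (1 + u (x - t) (y - t)) * mass + mom₁
  · rw [(ρt.fun_mul vt).deriv, ((ρx.fun_mul ux).fun_mul vx).deriv,
      ((ρy.fun_mul (vy.fun_pow 2)).fun_add py).deriv]
    linear_combination (1 + v (x - t) (y - t)) * mass + mom₂
  · rw [Et.deriv, (ux.fun_mul (Ex.fun_add px)).deriv, (vy.fun_mul (Ey.fun_add py)).deriv]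
    have hγ₁ : γ - 1 ≠ 0 := sub_ne_zero.mpr hγ
    linear_combination (norm := skip) (γ - 1)⁻¹ * pres
      + ((1 + u (x - t) (y - t)) ^ 2 + (1 + v (x - t) (y - t)) ^ 2) / 2 * mass
      + (1 + u (x - t) (y - t)) * mom₁ + (1 + v (x - t) (y - t)) * mom₂
    field_simp
    ring

section IsentropicVortex

variable {γ δ c s : ℝ}

theorem one_add_neg_mul_exp_one_sub_pos (hδ : δ * exp 1 < 1) (hs : 0 ≤ s) :
    0 < 1 + -δ * exp (1 - s) := by
  rcases le_or_gt δ 0 with hδ₀ | hδ₀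
  · nlinarith [exp_pos (1 - s)]
  · have : exp (1 - s) ≤ exp 1 := exp_le_exp.mpr (by linarith)
    nlinarith

theorem hasDerivAt_isentropicVortex_pressure (hγ : γ ≠ 1) (hδ : 2 * γ * δ = (γ - 1) * c ^ 2)
    (hT : 0 < 1 + -δ * exp (1 - s)) :
    HasDerivAt (fun s => (1 + -δ * exp (1 - s)) ^ (γ / (γ - 1)))
      ((1 + -δ * exp (1 - s)) ^ (1 / (γ - 1)) * (c * exp ((1 - s) / 2)) ^ 2 / 2) s := by
  have hγ₁ : γ - 1 ≠ 0 := sub_ne_zero.mpr hγ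
  have hT' : HasDerivAt (fun s => 1 + -δ * exp (1 - s)) (δ * exp (1 - s)) s := by
    simpa using (((hasDerivAt_id s).const_sub 1).exp.const_mul (-δ)).const_add 1
  refine (hT'.rpow_const (p := γ / (γ - 1)) (Or.inl hT.ne')).congr_deriv ?_
  have hexp : exp ((1 - s) / 2) ^ 2 = exp (1 - s) := by rw [← exp_nat_mul]; ring_nf
  rw [show γ / (γ - 1) - 1 = 1 / (γ - 1) by field_simp; ring, mul_pow, hexp]
  generalize (1 + -δ * exp (1 - s)) ^ (1 / (γ - 1)) = R
  field_simp
  linear_combination R * hδ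

end IsentropicVortex

theorem convected_isentropic_vortex_solves_euler_general
    (γ ε : ℝ) (hγ : 1 < γ)
    (hsmall : (γ - 1) * ε ^ 2 * Real.exp 1 / (8 * γ * Real.pi ^ 2) < 1)
    (c : ℝ) (hc : c = ε / (2 * Real.pi))
    (ρs us vs ps : ℝ → ℝ → ℝ)
    (hρs : ∀ x y, ρs x y =
      (1 + -((γ - 1) * ε ^ 2 / (8 * γ * Real.pi ^ 2)) *
        Real.exp (1 - ((x - 5) ^ 2 + (y - 5) ^ 2))) ^ (1 / (γ - 1)))
    (hps : ∀ x y, ps x y =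
      (1 + -((γ - 1) * ε ^ 2 / (8 * γ * Real.pi ^ 2)) *
        Real.exp (1 - ((x - 5) ^ 2 + (y - 5) ^ 2))) ^ (γ / (γ - 1)))
    (hus : ∀ x y, us x y =
      -(c * Real.exp ((1 - ((x - 5) ^ 2 + (y - 5) ^ 2)) / 2) * (y - 5)))
    (hvs : ∀ x y, vs x y =
      c * Real.exp ((1 - ((x - 5) ^ 2 + (y - 5) ^ 2)) / 2) * (x - 5))
    (ρ u v p E : ℝ → ℝ → ℝ → ℝ)
    (hρ : ∀ x y t, ρ x y t = ρs (x - t) (y - t))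
    (hu : ∀ x y t, u x y t = 1 + us (x - t) (y - t))
    (hv : ∀ x y t, v x y t = 1 + vs (x - t) (y - t))
    (hp : ∀ x y t, p x y t = ps (x - t) (y - t))
    (hE : ∀ x y t, E x y t =
      p x y t / (γ - 1) + ρ x y t * (u x y t ^ 2 + v x y t ^ 2) / 2) :
    ∀ x y t : ℝ,
      -- mass conservation
      (deriv (fun t' => ρ x y t') t
        + deriv (fun x' => ρ x' y t * u x' y t) x
        + deriv (fun y' => ρ x y' t * v x y' t) y = 0) ∧
      -- x-momentum
      (deriv (fun t' => ρ x y t' * u x y t') t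
        + deriv (fun x' => ρ x' y t * u x' y t ^ 2 + p x' y t) x
        + deriv (fun y' => ρ x y' t * u x y' t * v x y' t) y = 0) ∧
      -- y-momentum
      (deriv (fun t' => ρ x y t' * v x y t') t
        + deriv (fun x' => ρ x' y t * u x' y t * v x' y t) x
        + deriv (fun y' => ρ x y' t * v x y' t ^ 2 + p x y' t) y = 0) ∧
      -- energy
      (deriv (fun t' => E x y t') t
        + deriv (fun x' => u x' y t * (E x' y t + p x' y t)) x
        + deriv (fun y' => v x y' t * (E x y' t + p x y' t)) y = 0) := by
  intro x y t
  set δ := (γ - 1) * ε ^ 2 / (8 * γ * π ^ 2) with hδ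
  have hbalance : 2 * γ * δ = (γ - 1) * c ^ 2 := by
    rw [hδ, hc]
    field_simp
    ring
  have hT : 0 < 1 + -δ * exp (1 - ((x - t - 5) ^ 2 + (y - t - 5) ^ 2)) :=
    one_add_neg_mul_exp_one_sub_pos (by rwa [div_mul_eq_mul_div]) (by positivity)
  have hstat : IsStationaryEulerAt γ (uncurry ρs) (uncurry us) (uncurry vs) (uncurry ps)
      (x - t, y - t) := by
    rw [show uncurry ρs = _ from funext fun z => hρs z.1 z.2,
      show uncurry us = _ from funext fun z => hus z.1 z.2,
      show uncurry vs = _ from funext fun z => hvs z.1 z.2,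
      show uncurry ps = _ from funext fun z => hps z.1 z.2]
    exact isStationaryEulerAt_swirl γ (x₀ := 5) (y₀ := 5)
      (R := fun s => (1 + -δ * exp (1 - s)) ^ (1 / (γ - 1)))
      (W := fun s => c * exp ((1 - s) / 2))
      (P := fun s => (1 + -δ * exp (1 - s)) ^ (γ / (γ - 1)))
      (DifferentiableAt.rpow_const (by fun_prop) (Or.inl hT.ne'))
      (by fun_prop) (hasDerivAt_isentropicVortex_pressure hγ.ne' hbalance hT)
  simp only [hE, hρ, hu, hv, hp]
  exact hstat.conservation_laws_convected hγ.ne'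

/-- The convected isentropic vortex with background velocity `(1,1)`: the
time-shifted stationary vortex fields `Q_e(x,y,t) = Q(x-t, y-t, 0)` form an exact
solution of the time-dependent two-dimensional compressible Euler equations. -/
theorem convected_isentropic_vortex_solves_euler
    (γ ε : ℝ) (hγ : 1 < γ) (hε : 0 < ε)
    (hsmall : (γ - 1) * ε ^ 2 * Real.exp 1 / (8 * γ * Real.pi ^ 2) < 1)
    (c : ℝ) (hc : c = ε / (2 * Real.pi))
    (ρs us vs ps : ℝ → ℝ → ℝ)
    (hρs : ∀ x y, ρs x y =
      (1 + -((γ - 1) * ε ^ 2 / (8 * γ * Real.pi ^ 2)) *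
        Real.exp (1 - ((x - 5) ^ 2 + (y - 5) ^ 2))) ^ (1 / (γ - 1)))
    (hps : ∀ x y, ps x y =
      (1 + -((γ - 1) * ε ^ 2 / (8 * γ * Real.pi ^ 2)) *
        Real.exp (1 - ((x - 5) ^ 2 + (y - 5) ^ 2))) ^ (γ / (γ - 1)))
    (hus : ∀ x y, us x y =
      -(c * Real.exp ((1 - ((x - 5) ^ 2 + (y - 5) ^ 2)) / 2) * (y - 5)))
    (hvs : ∀ x y, vs x y =
      c * Real.exp ((1 - ((x - 5) ^ 2 + (y - 5) ^ 2)) / 2) * (x - 5))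
    (ρ u v p E : ℝ → ℝ → ℝ → ℝ)
    (hρ : ∀ x y t, ρ x y t = ρs (x - t) (y - t))
    (hu : ∀ x y t, u x y t = 1 + us (x - t) (y - t))
    (hv : ∀ x y t, v x y t = 1 + vs (x - t) (y - t))
    (hp : ∀ x y t, p x y t = ps (x - t) (y - t))
    (hE : ∀ x y t, E x y t =
      p x y t / (γ - 1) + ρ x y t * (u x y t ^ 2 + v x y t ^ 2) / 2) :
    ∀ x y t : ℝ,
      -- mass conservation
      (deriv (fun t' => ρ x y t') t
        + deriv (fun x' => ρ x' y t * u x' y t) x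
        + deriv (fun y' => ρ x y' t * v x y' t) y = 0) ∧
      -- x-momentum
      (deriv (fun t' => ρ x y t' * u x y t') t
        + deriv (fun x' => ρ x' y t * u x' y t ^ 2 + p x' y t) x
        + deriv (fun y' => ρ x y' t * u x y' t * v x y' t) y = 0) ∧
      -- y-momentum
      (deriv (fun t' => ρ x y t' * v x y t') t
        + deriv (fun x' => ρ x' y t * u x' y t * v x' y t) x
        + deriv (fun y' => ρ x y' t * v x y' t ^ 2 + p x y' t) y = 0) ∧
      -- energy
      (deriv (fun t' => E x y t') t
        + deriv (fun x' => u x' y t * (E x' y t + p x' y t)) x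
        + deriv (fun y' => v x y' t * (E x y' t + p x y' t)) y = 0) :=
  convected_isentropic_vortex_solves_euler_general γ ε hγ hsmall c hc ρs us vs ps hρs hps hus hvs ρ
    u v p E hρ hu hv hp hE
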